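/- arXiv:2008.13287 — 4 statements merged into one kernel-verified Lean document; each statement's English description precedes it below -/
import Mathlib

section
/- For every nonnegative integer s and all 1 ≤ k ≤ n, the s-th power of A satisfies [A^s]_{k,n} = (a_k/a_n)·(1/k!)·(d/dt)^n_{t=0}[ ((φ∘ω)^⟨s⟩(t))^k · ∏_{i=0}^{s-1} g(ω((φ∘ω)^⟨i⟩(t))) ], where the empty product (s = 0) equals 1. -/
/-!
Write `Φ = φ ∘ ω` and `G = g ∘ ω`. Lagrange inversion, `[tⁿ⁻¹] hⁿ R' = n [tⁿ] R(ω)`, rewrites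
the entries of `A` as `[A]_{j,n} = (a_j / a_n) (n! / j!) [tⁿ] Φʲ G`. For such a matrix,
`∑ⱼ [tʲ] Q · [tⁿ] Φʲ G = [tⁿ] Q(Φ) G`, so right multiplication by `A` acts on generating
series as `Q ↦ Q(Φ) · G`; iterating from `Q = tᵏ` gives the formula for `Aˢ`.

Lagrange inversion itself comes from `ψ = t / h`, the compositional inverse of `ω`: a direct
computation gives `[tⁿ⁻¹] hⁿ (ψᵐ)' = n δₘₙ` for `m ≤ n`, and `R` agrees with
`∑_{m ≤ n} [tᵐ] R(ω) · ψᵐ` modulo `tⁿ⁺¹`.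
-/

open PowerSeries Finset

noncomputable section

/-- Product of two infinite matrices of complex numbers (indexed by positive integers,
upper triangular): `[A·B]_{k,n} = ∑_{j=k}^{n} [A]_{k,j}·[B]_{j,n}`. -/
def triMul (A B : ℕ → ℕ → ℂ) : ℕ → ℕ → ℂ :=
  fun k n => ∑ j ∈ Finset.Icc k n, A k j * B j n

/-- The identity matrix. -/
def triId : ℕ → ℕ → ℂ := fun k n => if k = n then 1 else 0

/-- Powers of a matrix: `A^0 = I`, `A^{s+1} = A^s · A`. -/
def triPow (A : ℕ → ℕ → ℂ) : ℕ → ℕ → ℕ → ℂ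
  | 0 => triId
  | s + 1 => triMul (triPow A s) A

/-- Composition `F ∘ G` of formal power series (intended for `G` with zero
constant coefficient): the coefficient of `t^n` is `∑_{j=0}^{n} F_j · [t^n](G^j)`. -/
def psComp (F G : PowerSeries ℂ) : PowerSeries ℂ :=
  PowerSeries.mk fun n =>
    ∑ j ∈ Finset.range (n + 1), (PowerSeries.coeff j F) * (PowerSeries.coeff n (G ^ j))

/-- Iterated composition: `φ^⟨0⟩ = t`, `φ^⟨s+1⟩ = φ^⟨s⟩ ∘ φ`. -/
def iterComp (φ : PowerSeries ℂ) : ℕ → PowerSeries ℂ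
  | 0 => PowerSeries.X
  | s + 1 => psComp (iterComp φ s) φ

namespace PowerSeries

section CommRing

variable {R : Type*} [CommRing R]

theorem coeff_pow_eq_zero_of_lt {G : R⟦X⟧} (hG : constantCoeff G = 0) {n j : ℕ} (h : n < j) :
    coeff n (G ^ j) = 0 :=
  X_pow_dvd_iff.mp (pow_dvd_pow_of_dvd (X_dvd_iff.mpr hG) j) n h

theorem coeff_subst_eq_sum_range {G : R⟦X⟧} (hG : constantCoeff G = 0) (F : R⟦X⟧)
    {n m : ℕ} (hnm : n ≤ m) :
    coeff n (F.subst G) = ∑ j ∈ range (m + 1), coeff j F * coeff n (G ^ j) := by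
  rw [coeff_subst' (HasSubst.of_constantCoeff_zero' hG)]
  refine finsum_eq_sum_of_support_subset _ fun j hj => ?_
  by_contra hjm
  simp only [coe_range, Set.mem_Iio, not_lt] at hjm
  exact hj (by simp only [coeff_pow_eq_zero_of_lt hG (by omega : n < j), smul_zero])

theorem coeff_subst_mul_eq_sum_range {G : R⟦X⟧} (hG : constantCoeff G = 0) (F K : R⟦X⟧)
    (n : ℕ) :
    coeff n (F.subst G * K) = ∑ j ∈ range (n + 1), coeff j F * coeff n (G ^ j * K) := by
  simp_rw [coeff_mul, Finset.mul_sum, ← mul_assoc]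
  rw [Finset.sum_comm]
  refine Finset.sum_congr rfl fun x hx => ?_
  rw [coeff_subst_eq_sum_range hG F (HasAntidiagonal.antidiagonal.fst_le hx), Finset.sum_mul]

theorem X_pow_dvd_subst {G : R⟦X⟧} (hG : constantCoeff G = 0) {F : R⟦X⟧} {k : ℕ}
    (hF : X ^ k ∣ F) : X ^ k ∣ F.subst G := by
  obtain ⟨U, rfl⟩ := hF
  have hG' := HasSubst.of_constantCoeff_zero' hG
  rw [subst_mul hG', subst_pow hG', subst_X hG']
  exact (pow_dvd_pow_of_dvd (X_dvd_iff.mpr hG) k).mul_right _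

theorem X_pow_dvd_derivative {F : R⟦X⟧} {k : ℕ} (hF : X ^ (k + 1) ∣ F) :
    X ^ k ∣ d⁄dX R F := by
  obtain ⟨U, rfl⟩ := hF
  rw [Derivation.leibniz, derivative_pow, derivative_X, smul_eq_mul, smul_eq_mul,
    Nat.add_sub_cancel]
  exact Dvd.intro (X * d⁄dX R U + U * ((k + 1 : ℕ) : R⟦X⟧)) (by ring)

end CommRing

section Field

variable {K : Type*} [Field K] {h ω : K⟦X⟧}

theorem coeff_pow_mul_derivative [CharZero K] (f : K⟦X⟧) (r : ℕ) :
    coeff r (f ^ r * d⁄dX K f) = coeff (r + 1) (f ^ (r + 1)) := by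
  have hd := congrArg (coeff r) (derivative_pow f (r + 1))
  rw [coeff_derivative, Nat.add_sub_cancel, ← map_natCast (C (R := K)), mul_assoc,
    coeff_C_mul] at hd
  push_cast at hd
  apply mul_left_cancel₀ (Nat.cast_add_one_ne_zero r : (r : K) + 1 ≠ 0)
  linear_combination -hd

theorem coeff_pow_mul_derivative_X_mul_inv_pow [CharZero K] (hh : constantCoeff h ≠ 0)
    {m n : ℕ} (hn : n ≠ 0) (hmn : m ≤ n) :
    coeff (n - 1) (h ^ n * d⁄dX K ((X * h⁻¹) ^ m)) = if m = n then (n : K) else 0 := by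
  rcases m with _ | q
  · simp [Ne.symm hn]
  obtain ⟨p, rfl⟩ := Nat.exists_eq_add_of_le hmn
  have hpow : h ^ (q + 1) * h⁻¹ ^ (q + 1) = 1 := by
    rw [← mul_pow, PowerSeries.mul_inv_cancel h hh, one_pow]
  have key : h ^ (q + 1 + p) * d⁄dX K ((X * h⁻¹) ^ (q + 1))
      = C ((q + 1 : ℕ) : K) * (X ^ q * h ^ p)
        - C ((q + 1 : ℕ) : K) * (X ^ (q + 1) * (h ^ p * h⁻¹ * d⁄dX K h)) := by
    rw [derivative_pow, Derivation.leibniz, derivative_X, derivative_inv', map_natCast,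
      Nat.add_sub_cancel, smul_eq_mul, smul_eq_mul]
    linear_combination (((q + 1 : ℕ) : K⟦X⟧) * X ^ q * h ^ p
      - ((q + 1 : ℕ) : K⟦X⟧) * X ^ (q + 1) * h ^ p * h⁻¹ * d⁄dX K h) * hpow
  rw [key, show q + 1 + p - 1 = q + p by omega, map_sub, coeff_C_mul, coeff_C_mul,
    coeff_X_pow_mul', coeff_X_pow_mul', if_pos (by omega), Nat.add_sub_cancel_left]
  rcases p with _ | r
  · rw [if_neg (by omega), if_pos rfl]
    simp
  · have hinv : h ^ (r + 1) * h⁻¹ = h ^ r := by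
      rw [pow_succ, mul_assoc, PowerSeries.mul_inv_cancel h hh, mul_one]
    rw [if_pos (by omega), if_neg (by omega), hinv, show q + (r + 1) - (q + 1) = r by omega,
      coeff_pow_mul_derivative, sub_self]

theorem subst_X_mul_inv_eq_X (hh : constantCoeff h ≠ 0) (hω : ω = X * h.subst ω) :
    (X * h⁻¹).subst ω = X := by
  have hω' : HasSubst ω :=
    HasSubst.of_constantCoeff_zero' (by rw [hω, map_mul, constantCoeff_X, zero_mul])
  calc (X * h⁻¹).subst ω = ω * h⁻¹.subst ω := by rw [subst_mul hω', subst_X hω']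
    _ = X * (h * h⁻¹).subst ω := by rw [subst_mul hω', ← mul_assoc, ← hω]
    _ = X := by
      rw [PowerSeries.mul_inv_cancel h hh, ← coe_substAlgHom hω', map_one, mul_one]

theorem X_mul_inv_subst_eq_X (hh : constantCoeff h ≠ 0) (hω : ω = X * h.subst ω) :
    ω.subst (X * h⁻¹) = X := by
  have hω' : HasSubst ω :=
    HasSubst.of_constantCoeff_zero' (by rw [hω, map_mul, constantCoeff_X, zero_mul])
  have hψ : constantCoeff (X * h⁻¹) = 0 := by rw [map_mul, constantCoeff_X, zero_mul]
  have hψ' : IsUnit (coeff 1 (X * h⁻¹)) := by simpa [coeff_succ_X_mul] using hh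
  -- `ψ = X * h⁻¹` has a two-sided inverse `θ`, and `ψ ∘ ω = X` forces `θ = ω`.
  have hθ := subst_substInvOfIsUnit_left _ hψ hψ'
  generalize (X * h⁻¹).substInvOfIsUnit hψ' = θ at hθ
  have hθω : θ = ω := by
    calc θ = θ.subst ((X * h⁻¹).subst ω) := by rw [subst_X_mul_inv_eq_X hh hω, X_subst]
      _ = PowerSeries.subst ω (θ.subst (X * h⁻¹)) := by
        rw [subst_comp_subst_apply (HasSubst.of_constantCoeff_zero' hψ) hω']
      _ = ω := by rw [hθ, subst_X hω']
  rwa [← hθω]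

theorem coeff_pow_mul_derivative_eq_coeff_subst [CharZero K] (hh : constantCoeff h ≠ 0)
    (hω : ω = X * h.subst ω) {n : ℕ} (hn : n ≠ 0) (R : K⟦X⟧) :
    coeff (n - 1) (h ^ n * d⁄dX K R) = n * coeff n (R.subst ω) := by
  have hω' : HasSubst ω :=
    HasSubst.of_constantCoeff_zero' (by rw [hω, map_mul, constantCoeff_X, zero_mul])
  have hψ : constantCoeff (X * h⁻¹) = 0 := by rw [map_mul, constantCoeff_X, zero_mul]
  set F : K⟦X⟧ := R.subst ω
  set P := ∑ m ∈ range (n + 1), coeff m F • (X * h⁻¹) ^ m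
  have hPω : P.subst ω = ∑ m ∈ range (n + 1), coeff m F • X ^ m := by
    simp only [P, ← coe_substAlgHom hω', map_sum, map_smul, map_pow]
    rw [coe_substAlgHom, subst_X_mul_inv_eq_X hh hω]
  have hdvdω : X ^ (n + 1) ∣ (R - P).subst ω := by
    rw [subst_sub hω', hPω, X_pow_dvd_iff]
    intro i hi
    simp [F, coeff_X_pow, hi]
  have hdvd : X ^ (n + 1) ∣ R - P := by
    have := X_pow_dvd_subst hψ hdvdω
    rwa [subst_comp_subst_apply hω' (HasSubst.of_constantCoeff_zero' hψ),
      X_mul_inv_subst_eq_X hh hω, X_subst] at this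
  have htail : coeff (n - 1) (h ^ n * d⁄dX K (R - P)) = 0 := by
    obtain ⟨n', rfl⟩ := Nat.exists_eq_succ_of_ne_zero hn
    exact X_pow_dvd_iff.mp ((X_pow_dvd_derivative hdvd).mul_left _) _ (by omega)
  rw [← add_sub_cancel P R, map_add, mul_add, map_add, htail, add_zero]
  simp only [P, map_sum, Derivation.map_smul, Finset.mul_sum, mul_smul_comm, coeff_smul,
    smul_eq_mul]
  rw [Finset.sum_congr rfl fun m hm => by
    rw [coeff_pow_mul_derivative_X_mul_inv_pow hh hn (Nat.lt_succ_iff.mp (mem_range.mp hm))]]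
  simp [mul_comm]

end Field

end PowerSeries

theorem psComp_eq_subst {G : ℂ⟦X⟧} (hG : constantCoeff G = 0) (F : ℂ⟦X⟧) :
    psComp F G = F.subst G := by
  ext n
  rw [coeff_subst_eq_sum_range hG F le_rfl, psComp, coeff_mk]

section iterComp

variable {Φ : ℂ⟦X⟧} (hΦ : constantCoeff Φ = 0)
include hΦ

theorem constantCoeff_iterComp (s : ℕ) : constantCoeff (iterComp Φ s) = 0 := by
  induction s with
  | zero => exact constantCoeff_X
  | succ s ih =>
    rw [iterComp, psComp_eq_subst hΦ]
    exact constantCoeff_subst_eq_zero hΦ _ ih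

theorem iterComp_succ (s : ℕ) : iterComp Φ (s + 1) = (iterComp Φ s).subst Φ :=
  psComp_eq_subst hΦ _

theorem iterComp_succ_pow_mul_prod (G : ℂ⟦X⟧) (s k : ℕ) :
    iterComp Φ (s + 1) ^ k * ∏ i ∈ range (s + 1), G.subst (iterComp Φ i)
      = (iterComp Φ s ^ k * ∏ i ∈ range s, G.subst (iterComp Φ i)).subst Φ * G := by
  have hΦ' := HasSubst.of_constantCoeff_zero' hΦ
  rw [prod_range_succ', show iterComp Φ 0 = X from rfl, X_subst, subst_mul hΦ', subst_pow hΦ',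
    ← iterComp_succ hΦ, ← coe_substAlgHom hΦ', map_prod, mul_assoc]
  congr 2
  refine prod_congr rfl fun i _ => ?_
  rw [coe_substAlgHom, subst_comp_subst_apply
    (HasSubst.of_constantCoeff_zero' (constantCoeff_iterComp hΦ i)) hΦ', iterComp_succ hΦ]

theorem triPow_apply_eq_coeff_iterComp (a : ℕ → ℂ) (ha : ∀ n, 1 ≤ n → a n ≠ 0) (G : ℂ⟦X⟧)
    {A : ℕ → ℕ → ℂ} (hA : ∀ j n, 1 ≤ j → j ≤ n →
      A j n = a j / a n * (1 / j.factorial) * (n.factorial * coeff n (Φ ^ j * G)))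
    (s k n : ℕ) (hk : 1 ≤ k) (hkn : k ≤ n) :
    triPow A s k n = a k / a n * (1 / k.factorial) *
      (n.factorial * coeff n (iterComp Φ s ^ k * ∏ i ∈ range s, G.subst (iterComp Φ i))) := by
  have hfac : ∀ j : ℕ, (j.factorial : ℂ) ≠ 0 := fun j => Nat.cast_ne_zero.mpr j.factorial_ne_zero
  induction s generalizing n with
  | zero =>
    rw [triPow, triId, iterComp, prod_range_zero, mul_one, coeff_X_pow]
    rcases eq_or_ne k n with rfl | hne
    · field_simp [ha k hk, hfac k]
    · simp [hne, Ne.symm hne]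
  | succ s ih =>
    set Q := iterComp Φ s ^ k * ∏ i ∈ range s, G.subst (iterComp Φ i)
    have hQ : ∀ j < k, coeff j Q = 0 := X_pow_dvd_iff.mp <|
      (pow_dvd_pow_of_dvd (X_dvd_iff.mpr (constantCoeff_iterComp hΦ s)) k).mul_right _
    set c := a k / a n * (1 / k.factorial) * n.factorial with hc
    calc triPow A (s + 1) k n = ∑ j ∈ Icc k n, triPow A s k j * A j n := rfl
      _ = ∑ j ∈ Icc k n, c * (coeff j Q * coeff n (Φ ^ j * G)) := by
        refine sum_congr rfl fun j hj => ?_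
        obtain ⟨hkj, hjn⟩ := mem_Icc.mp hj
        rw [ih j hkj, hA j n (hk.trans hkj) hjn, hc]
        field_simp [ha j (hk.trans hkj), hfac j]
      _ = c * ∑ j ∈ range (n + 1), coeff j Q * coeff n (Φ ^ j * G) := by
        rw [← mul_sum]
        congr 1
        refine sum_subset (fun j hj => by simp at hj ⊢; omega) fun j hj hjk => ?_
        rw [hQ j (by simp at hj hjk; omega), zero_mul]
      _ = _ := by
        rw [← coeff_subst_mul_eq_sum_range hΦ, ← iterComp_succ_pow_mul_prod hΦ]
        ring

end iterComp

theorem stmt1_general (a : ℕ → ℂ) (ha : ∀ n, 1 ≤ n → a n ≠ 0)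
    (φ g h : PowerSeries ℂ)
    (hφ0 : constantCoeff φ = 0)
    (hne : constantCoeff (derivativeFun φ) * constantCoeff g * constantCoeff h ≠ 0)
    (ω : PowerSeries ℂ) (hω0 : constantCoeff ω = 0)
    (hω : ω = PowerSeries.X * psComp h ω)
    (A : ℕ → ℕ → ℂ)
    (hA : ∀ k n, 1 ≤ k → k ≤ n →
      A k n = a k / a n * (1 / k.factorial) *
        (((n - 1).factorial : ℂ) * coeff (n - 1) (h ^ n * derivativeFun (φ ^ k * g))))
    (s : ℕ) (k n : ℕ) (hk : 1 ≤ k) (hkn : k ≤ n) :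
    triPow A s k n = a k / a n * (1 / k.factorial) *
      ((n.factorial : ℂ) * coeff n ((iterComp (psComp φ ω) s) ^ k *
        ∏ i ∈ Finset.range s, psComp (psComp g ω) (iterComp (psComp φ ω) i))) := by
  have hω' := HasSubst.of_constantCoeff_zero' hω0
  have hΦ0 : constantCoeff (φ.subst ω) = 0 := constantCoeff_subst_eq_zero hω0 φ hφ0
  rw [psComp_eq_subst hω0] at hω
  have hA' : ∀ j n, 1 ≤ j → j ≤ n → A j n = a j / a n * (1 / j.factorial) *
      (n.factorial * coeff n ((φ.subst ω) ^ j * g.subst ω)) := by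
    intro j n hj hjn
    have hn : n ≠ 0 := by omega
    rw [hA j n hj hjn, ← Nat.mul_factorial_pred hn, derivativeFun,
      Derivation.toFun_eq_coe, coeff_pow_mul_derivative_eq_coeff_subst
        (right_ne_zero_of_mul hne) hω hn, subst_mul hω', subst_pow hω']
    push_cast
    ring
  simp only [psComp_eq_subst hω0,
    psComp_eq_subst (constantCoeff_iterComp hΦ0 _)]
  exact triPow_apply_eq_coeff_iterComp hΦ0 a ha (g.subst ω) hA' s k n hk hkn

/-- Theorem: the `s`-th power of the matrix with entries
`[A]_{k,n} = (a_k/a_n)·(1/k!)·(d/dt)^{n-1}_{t=0}[h(t)^n · (d/dt)(φ(t)^k g(t))]`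
is given by
`[A^s]_{k,n} = (a_k/a_n)·(1/k!)·(d/dt)^n_{t=0}[((φ∘ω)^⟨s⟩(t))^k · ∏_{i=0}^{s-1} g(ω((φ∘ω)^⟨i⟩(t)))]`,
where `ω(t) = t·h(ω(t))`, `ω(0) = 0`. -/
theorem stmt1 (a : ℕ → ℂ) (ha : ∀ n, 1 ≤ n → a n ≠ 0)
    (φ g h : PowerSeries ℂ)
    (hφ0 : constantCoeff φ = 0)
    (hne : constantCoeff (derivativeFun φ) * constantCoeff g * constantCoeff h ≠ 0)
    (ω : PowerSeries ℂ) (hω0 : constantCoeff ω = 0)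
    (hω : ω = PowerSeries.X * psComp h ω)
    (A : ℕ → ℕ → ℂ)
    (hAtri : ∀ k n, n < k → A k n = 0)
    (hA : ∀ k n, 1 ≤ k → k ≤ n →
      A k n = a k / a n * (1 / k.factorial) *
        (((n - 1).factorial : ℂ) * coeff (n - 1) (h ^ n * derivativeFun (φ ^ k * g))))
    (s : ℕ) (k n : ℕ) (hk : 1 ≤ k) (hkn : k ≤ n) :
    triPow A s k n = a k / a n * (1 / k.factorial) *
      ((n.factorial : ℂ) * coeff n ((iterComp (psComp φ ω) s) ^ k *
        ∏ i ∈ Finset.range s, psComp (psComp g ω) (iterComp (psComp φ ω) i))) :=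
  stmt1_general a ha φ g h hφ0 hne ω hω0 hω A hA s k n hk hkn
end
end

section
/- Let α be an integer and let A be the upper triangular matrix with entries [A]_{k,n} = (a_k/a_n)·C(n,k)·(d/dt)^{n-k}_{t=0}[ u(t)^{k-α} ], where u is the unique power series with t·u(t) = φ(t) (so u(0) = φ'(0) ≠ 0, u is invertible, and u^{k-α} is an integer power in the group of units of the ring of formal power series) and C(n,k) is the binomial coefficient. Then for every nonnegative integer s and all 1 ≤ k ≤ n, [A^s]_{k,n} = (a_k/a_n)·C(n,k)·(d/dt)^{n-k}_{t=0}[ u_s(t)^{k-α} ], where u_s is the unique power series with t·u_s(t) = φ^⟨s⟩(t). -/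
open PowerSeries Finset

noncomputable section

/-! ### Auxiliary lemmas -/

lemma coeff_psComp (F φ : PowerSeries ℂ) (n : ℕ) :
    coeff n (psComp F φ) = ∑ j ∈ range (n + 1), coeff j F * coeff n (φ ^ j) := by
  simp [psComp]

lemma coeff_pow_eq_zero {φ : PowerSeries ℂ} (hφ : PowerSeries.X ∣ φ) {m j : ℕ} (h : m < j) :
    coeff m (φ ^ j) = 0 := by
  have h2 : (PowerSeries.X : PowerSeries ℂ) ^ j ∣ φ ^ j := pow_dvd_pow_of_dvd hφ j
  rw [PowerSeries.X_pow_dvd_iff] at h2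
  exact h2 m h

lemma coeff_eval₂ {φ : PowerSeries ℂ} (hφ : PowerSeries.X ∣ φ) (P : Polynomial ℂ) (n : ℕ) :
    coeff n (P.eval₂ (PowerSeries.C) φ) = ∑ j ∈ range (n + 1), P.coeff j * coeff n (φ ^ j) := by
  set N := max (P.natDegree + 1) (n + 1) with hN
  have h1 : P.natDegree < N := lt_of_lt_of_le (Nat.lt_succ_self _) (le_max_left _ _)
  rw [Polynomial.eval₂_eq_sum_range' _ h1 _, map_sum]
  simp only [coeff_C_mul]
  refine (Finset.sum_subset ?_ ?_).symm
  · exact Finset.range_subset_range.2 (le_max_right _ _)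
  · intro j hj hnj
    rw [coeff_pow_eq_zero hφ (by simpa using hnj), mul_zero]

lemma coeff_psComp_trunc {φ : PowerSeries ℂ} (hφ : PowerSeries.X ∣ φ) (F : PowerSeries ℂ)
    {n N : ℕ} (hn : n < N) :
    coeff n (psComp F φ) = coeff n ((trunc N F).eval₂ (PowerSeries.C) φ) := by
  rw [coeff_eval₂ hφ, coeff_psComp]
  refine Finset.sum_congr rfl fun j hj => ?_
  rw [mem_range] at hj
  rw [coeff_trunc, if_pos (lt_of_lt_of_le hj hn)]

lemma psComp_mul {φ : PowerSeries ℂ} (hφ : PowerSeries.X ∣ φ) (F G : PowerSeries ℂ) :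
    psComp (F * G) φ = psComp F φ * psComp G φ := by
  ext n
  rw [coeff_psComp_trunc hφ _ (Nat.lt_succ_self n), PowerSeries.coeff_mul]
  have hfac : ∀ p ∈ antidiagonal n,
      coeff p.1 (psComp F φ) * coeff p.2 (psComp G φ) =
      coeff p.1 ((trunc (n+1) F).eval₂ (PowerSeries.C) φ) *
      coeff p.2 ((trunc (n+1) G).eval₂ (PowerSeries.C) φ) := by
    intro p hp
    rw [HasAntidiagonal.mem_antidiagonal] at hp
    rw [coeff_psComp_trunc hφ F (Nat.lt_succ_of_le (le_trans (Nat.le_add_right _ _) hp.le)),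
        coeff_psComp_trunc hφ G (Nat.lt_succ_of_le (le_trans (Nat.le_add_left _ _) hp.le))]
  rw [Finset.sum_congr rfl hfac, ← PowerSeries.coeff_mul, ← Polynomial.eval₂_mul]
  rw [coeff_eval₂ hφ, coeff_eval₂ hφ]
  refine Finset.sum_congr rfl fun j hj => ?_
  rw [mem_range, Nat.lt_succ_iff] at hj
  congr 1
  rw [coeff_trunc, if_pos (Nat.lt_succ_of_le hj), PowerSeries.coeff_mul, Polynomial.coeff_mul]
  refine Finset.sum_congr rfl fun p hp => ?_
  rw [HasAntidiagonal.mem_antidiagonal] at hp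
  rw [coeff_trunc, coeff_trunc,
    if_pos (Nat.lt_succ_of_le (le_trans (le_trans (Nat.le_add_right _ _) hp.le) hj)),
    if_pos (Nat.lt_succ_of_le (le_trans (le_trans (Nat.le_add_left _ _) hp.le) hj))]

lemma psComp_one (φ : PowerSeries ℂ) : psComp 1 φ = 1 := by
  ext n
  rw [coeff_psComp]
  rw [Finset.sum_eq_single 0]
  · simp
  · intro j _ hj
    simp [PowerSeries.coeff_one, hj]
  · simp

lemma psComp_X {φ : PowerSeries ℂ} (hφ0 : constantCoeff φ = 0) : psComp PowerSeries.X φ = φ := by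
  ext n
  rw [coeff_psComp]
  rw [Finset.sum_eq_single 1]
  · simp
  · intro j _ hj
    simp [PowerSeries.coeff_X, hj]
  · intro h
    simp only [mem_range, Nat.lt_succ_iff, not_le, Nat.lt_one_iff] at h
    have hn : n = 0 := by omega
    subst hn
    simp [hφ0]

/-- Composition with a fixed `φ` (with `X ∣ φ`) as a monoid hom. -/
def compHom (φ : PowerSeries ℂ) (hφ : PowerSeries.X ∣ φ) : PowerSeries ℂ →* PowerSeries ℂ where
  toFun F := psComp F φ
  map_one' := psComp_one φ
  map_mul' F G := psComp_mul hφ F G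

lemma cchoose {k j n : ℕ} (h1 : k ≤ j) (h2 : j ≤ n) :
    ((j.choose k : ℂ)) * ((j - k).factorial : ℂ) * ((n.choose j : ℂ) * ((n - j).factorial : ℂ)) =
    (n.choose k : ℂ) * ((n - k).factorial : ℂ) := by
  have hk : ((k.factorial : ℂ)) ≠ 0 := Nat.cast_ne_zero.2 k.factorial_pos.ne'
  apply mul_right_cancel₀ hk
  have key : (j.choose k) * (j - k).factorial * ((n.choose j) * (n - j).factorial) * k.factorial
      = (n.choose k) * (n - k).factorial * k.factorial := by
    have a := Nat.choose_mul_factorial_mul_factorial h1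
    have b := Nat.choose_mul_factorial_mul_factorial h2
    have c := Nat.choose_mul_factorial_mul_factorial (h1.trans h2)
    calc (j.choose k) * (j - k).factorial * ((n.choose j) * (n - j).factorial) * k.factorial
        = (j.choose k * k.factorial * (j - k).factorial) * ((n.choose j) * (n - j).factorial) := by
          ring
      _ = (n.choose j * j.factorial * (n - j).factorial) := by rw [a]; ring
      _ = n.factorial := b
      _ = n.choose k * k.factorial * (n - k).factorial := c.symm
      _ = (n.choose k) * (n - k).factorial * k.factorial := by ring
  have keyC := congrArg (fun m : ℕ => (m : ℂ)) key
  push_cast at keyC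
  linear_combination keyC

lemma term_eq (ak aj an c d B1 f1 B2 f2 B f : ℂ) (haj : aj ≠ 0) (han : an ≠ 0)
    (hB : B1 * f1 * (B2 * f2) = B * f) :
    (ak / aj * B1 * (f1 * c)) * (aj / an * B2 * (f2 * d)) = ak / an * B * (f * (c * d)) := by
  field_simp
  linear_combination (ak * c * d) * hB

lemma core (φ0 : ℂ⟦X⟧) (hφdvd0 : PowerSeries.X ∣ φ0) (w v : ℂ⟦X⟧ˣ)
    (hw : PowerSeries.X * (w : ℂ⟦X⟧) = φ0) (α : ℤ) (k n : ℕ) (hkn : k ≤ n) :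
    ∑ j ∈ Icc k n, coeff (j - k) ((v ^ ((k : ℤ) - α) : ℂ⟦X⟧ˣ) : ℂ⟦X⟧) *
      coeff (n - j) ((w ^ ((j : ℤ) - α) : ℂ⟦X⟧ˣ) : ℂ⟦X⟧) =
    coeff (n - k)
      (((w * Units.map (compHom φ0 hφdvd0) v)
        ^ ((k : ℤ) - α) : ℂ⟦X⟧ˣ) : ℂ⟦X⟧) := by
  subst hw
  set φ : ℂ⟦X⟧ := PowerSeries.X * (w : ℂ⟦X⟧) with hφdef
  have hφdvd : PowerSeries.X ∣ φ := hφdvd0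
  have hφ0 : constantCoeff φ = 0 := by simp [hφdef]
  set ch := compHom φ hφdvd0 with hch
  set U : ℂ⟦X⟧ˣ := Units.map ch v with hU
  set F : ℂ⟦X⟧ := PowerSeries.X ^ k * ((v ^ ((k : ℤ) - α) : ℂ⟦X⟧ˣ) : ℂ⟦X⟧) with hF
  set W : ℂ⟦X⟧ := ((w ^ (-α) : ℂ⟦X⟧ˣ) : ℂ⟦X⟧) with hW
  -- Step A : rewrite each term
  have stepA : ∀ j ∈ Icc k n,
      coeff (j - k) ((v ^ ((k : ℤ) - α) : ℂ⟦X⟧ˣ) : ℂ⟦X⟧) *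
        coeff (n - j) ((w ^ ((j : ℤ) - α) : ℂ⟦X⟧ˣ) : ℂ⟦X⟧) =
      coeff j F * coeff n (φ ^ j * W) := by
    intro j hj
    rw [mem_Icc] at hj
    have h1 : coeff j F = coeff (j - k) ((v ^ ((k : ℤ) - α) : ℂ⟦X⟧ˣ) : ℂ⟦X⟧) := by
      conv_lhs => rw [show j = (j - k) + k from (Nat.sub_add_cancel hj.1).symm]
      rw [hF, coeff_X_pow_mul]
    have h2 : φ ^ j * W = PowerSeries.X ^ j * ((w ^ ((j : ℤ) - α) : ℂ⟦X⟧ˣ) : ℂ⟦X⟧) := by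
      have : w ^ ((j : ℤ) - α) = w ^ j * w ^ (-α) := by
        rw [sub_eq_add_neg, zpow_add, zpow_natCast]
      rw [this, hφdef, mul_pow, hW, Units.val_mul, Units.val_pow_eq_pow_val]
      ring
    have h3 : coeff n (φ ^ j * W) =
        coeff (n - j) ((w ^ ((j : ℤ) - α) : ℂ⟦X⟧ˣ) : ℂ⟦X⟧) := by
      rw [h2]
      conv_lhs => rw [show n = (n - j) + j from (Nat.sub_add_cancel hj.2).symm]
      rw [coeff_X_pow_mul]
    rw [h1, h3]
  rw [Finset.sum_congr rfl stepA]
  -- Step B : extend to range (n+1)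
  have stepB : ∑ j ∈ Icc k n, coeff j F * coeff n (φ ^ j * W) =
      ∑ j ∈ range (n + 1), coeff j F * coeff n (φ ^ j * W) := by
    refine Finset.sum_subset ?_ ?_
    · intro j hj; rw [mem_Icc] at hj; rw [mem_range]; omega
    · intro j hj hj2
      rw [mem_range] at hj; rw [mem_Icc] at hj2
      have hjk : j < k := by omega
      rw [hF, PowerSeries.coeff_X_pow_mul', if_neg (by omega), zero_mul]
  rw [stepB]
  -- Step C : identify with a product coefficient
  have stepC : ∑ j ∈ range (n + 1), coeff j F * coeff n (φ ^ j * W) =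
      coeff n (psComp F φ * W) := by
    rw [PowerSeries.coeff_mul]
    have h1 : ∀ p ∈ antidiagonal n,
        coeff p.1 (psComp F φ) * coeff p.2 W =
        ∑ j ∈ range (n + 1), coeff j F * (coeff p.1 (φ ^ j) * coeff p.2 W) := by
      intro p hp
      rw [HasAntidiagonal.mem_antidiagonal] at hp
      rw [coeff_psComp, Finset.sum_mul]
      have hsub : range (p.1 + 1) ⊆ range (n + 1) := by
        apply Finset.range_subset_range.2; omega
      rw [← Finset.sum_subset hsub ?_]
      · exact Finset.sum_congr rfl fun j _ => by ring
      · intro j hj hj2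
        rw [mem_range] at hj hj2
        simp [coeff_pow_eq_zero hφdvd (show p.1 < j by omega)]
    rw [Finset.sum_congr rfl h1, Finset.sum_comm]
    refine Finset.sum_congr rfl fun j _ => ?_
    rw [← Finset.mul_sum]
    congr 1
    rw [PowerSeries.coeff_mul]
  rw [stepC]
  -- Step D : compute psComp F φ * W
  have hchX : ch PowerSeries.X = φ := psComp_X hφ0
  have stepD : psComp F φ * W = PowerSeries.X ^ k * (((w * U) ^ ((k : ℤ) - α) : ℂ⟦X⟧ˣ) : ℂ⟦X⟧) := by
    have h1 : psComp F φ = ch F := rfl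
    have h2 : ch F = φ ^ k * ((U ^ ((k : ℤ) - α) : ℂ⟦X⟧ˣ) : ℂ⟦X⟧) := by
      rw [hF, map_mul, map_pow, hchX]
      congr 1
      have : ch ((v ^ ((k : ℤ) - α) : ℂ⟦X⟧ˣ) : ℂ⟦X⟧) =
          ((Units.map ch (v ^ ((k : ℤ) - α)) : ℂ⟦X⟧ˣ) : ℂ⟦X⟧) := rfl
      rw [this, map_zpow]
    have h3 : (w * U) ^ ((k : ℤ) - α) = w ^ (k : ℤ) * w ^ (-α) * U ^ ((k : ℤ) - α) := by
      rw [mul_zpow]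
      congr 1
      rw [sub_eq_add_neg, zpow_add]
    rw [h1, h2, h3]
    simp only [hφdef, hW, mul_pow, Units.val_mul, zpow_natCast, Units.val_pow_eq_pow_val]
    ring
  rw [stepD]
  conv_lhs => rw [show n = (n - k) + k from (Nat.sub_add_cancel hkn).symm]
  rw [coeff_X_pow_mul]

/-- The units `v_s` with `X * v_s = φ^⟨s⟩`, built recursively. -/
def vUnit (φ : ℂ⟦X⟧) (hφ : PowerSeries.X ∣ φ) (u : ℂ⟦X⟧ˣ) : ℕ → ℂ⟦X⟧ˣ
  | 0 => 1
  | s + 1 => u * Units.map (compHom φ hφ) (vUnit φ hφ u s)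

lemma X_mul_vUnit (φ : ℂ⟦X⟧) (hφ : PowerSeries.X ∣ φ) (u : ℂ⟦X⟧ˣ)
    (hu : PowerSeries.X * (u : ℂ⟦X⟧) = φ) :
    ∀ s, PowerSeries.X * ((vUnit φ hφ u s : ℂ⟦X⟧ˣ) : ℂ⟦X⟧) = iterComp φ s := by
  have hφ0 : constantCoeff φ = 0 := by rw [← hu]; simp
  intro s
  induction s with
  | zero => simp [vUnit, iterComp]
  | succ s ih =>
    have hmap : ((Units.map (compHom φ hφ) (vUnit φ hφ u s) : ℂ⟦X⟧ˣ) : ℂ⟦X⟧) =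
        psComp ((vUnit φ hφ u s : ℂ⟦X⟧ˣ) : ℂ⟦X⟧) φ := rfl
    show PowerSeries.X * ((u * Units.map (compHom φ hφ) (vUnit φ hφ u s) : ℂ⟦X⟧ˣ) : ℂ⟦X⟧) =
      psComp (iterComp φ s) φ
    rw [Units.val_mul, ← ih, psComp_mul hφ, psComp_X hφ0, hmap, ← mul_assoc, hu]

/-- Corollary (integer `α`): for the matrix
`[A]_{k,n} = (a_k/a_n)·C(n,k)·(d/dt)^{n-k}_{t=0}[u(t)^{k-α}]`, where `u` is the unit power
series with `t·u(t) = φ(t)`, one has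
`[A^s]_{k,n} = (a_k/a_n)·C(n,k)·(d/dt)^{n-k}_{t=0}[u_s(t)^{k-α}]`, where `u_s` is the unit
power series with `t·u_s(t) = φ^⟨s⟩(t)`; the powers are integer powers in the group of
units of `ℂ⟦X⟧`. -/
theorem stmt13 (a : ℕ → ℂ) (ha : ∀ n, 1 ≤ n → a n ≠ 0)
    (φ : PowerSeries ℂ)
    (hφ0 : constantCoeff φ = 0)
    (hφ1 : constantCoeff (derivativeFun φ) ≠ 0)
    (α : ℤ)
    (u : (PowerSeries ℂ)ˣ) (hu : PowerSeries.X * (u : PowerSeries ℂ) = φ)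
    (A : ℕ → ℕ → ℂ)
    (hAtri : ∀ k n, n < k → A k n = 0)
    (hA : ∀ k n, 1 ≤ k → k ≤ n →
      A k n = a k / a n * (n.choose k : ℂ) *
        (((n - k).factorial : ℂ) *
          coeff (n - k) ((u ^ ((k : ℤ) - α) : (PowerSeries ℂ)ˣ) : PowerSeries ℂ)))
    (s : ℕ) (us : (PowerSeries ℂ)ˣ)
    (hus : PowerSeries.X * (us : PowerSeries ℂ) = iterComp φ s)
    (k n : ℕ) (hk : 1 ≤ k) (hkn : k ≤ n) :
    triPow A s k n = a k / a n * (n.choose k : ℂ) *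
      (((n - k).factorial : ℂ) *
        coeff (n - k) ((us ^ ((k : ℤ) - α) : (PowerSeries ℂ)ˣ) : PowerSeries ℂ)) := by
  have hφdvd : PowerSeries.X ∣ φ := ⟨(u : ℂ⟦X⟧), hu.symm⟩
  set vs : ℕ → ℂ⟦X⟧ˣ := vUnit φ hφdvd u with hvs
  have hXv : ∀ t, PowerSeries.X * ((vs t : ℂ⟦X⟧ˣ) : ℂ⟦X⟧) = iterComp φ t :=
    X_mul_vUnit φ hφdvd u hu
  have main : ∀ t k n, 1 ≤ k → k ≤ n → triPow A t k n =
      a k / a n * (n.choose k : ℂ) *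
        (((n - k).factorial : ℂ) *
          coeff (n - k) ((vs t ^ ((k : ℤ) - α) : ℂ⟦X⟧ˣ) : ℂ⟦X⟧)) := by
    intro t
    induction t with
    | zero =>
      intro k n hk hkn
      have hv0 : vs 0 = 1 := rfl
      rw [hv0, one_zpow, Units.val_one]
      by_cases h : k = n
      · subst h
        show triId k k = _
        simp [triId, Nat.sub_self, div_self (ha k hk), PowerSeries.coeff_zero_eq_constantCoeff]
      · have hlt : k < n := lt_of_le_of_ne hkn h
        show triId k n = _
        rw [triId]
        rw [if_neg h, PowerSeries.coeff_one, if_neg (by omega)]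
        ring
    | succ t ih =>
      intro k n hk hkn
      show triMul (triPow A t) A k n = _
      rw [triMul]
      have hterm : ∀ j ∈ Icc k n, triPow A t k j * A j n =
          a k / a n * (n.choose k : ℂ) *
            (((n - k).factorial : ℂ) *
              (coeff (j - k) ((vs t ^ ((k : ℤ) - α) : ℂ⟦X⟧ˣ) : ℂ⟦X⟧) *
               coeff (n - j) ((u ^ ((j : ℤ) - α) : ℂ⟦X⟧ˣ) : ℂ⟦X⟧))) := by
        intro j hj
        rw [mem_Icc] at hj
        have hj1 : 1 ≤ j := le_trans hk hj.1
        rw [ih k j hk hj.1, hA j n hj1 hj.2]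
        exact term_eq (a k) (a j) (a n) _ _ _ _ _ _ _ _ (ha j hj1) (ha n (by omega))
          (cchoose hj.1 hj.2)
      rw [Finset.sum_congr rfl hterm, ← Finset.mul_sum, ← Finset.mul_sum]
      congr 2
      have hv : vs (t + 1) = u * Units.map (compHom φ hφdvd) (vs t) := rfl
      rw [hv]
      exact core φ hφdvd u (vs t) hu α k n hkn
  have husv : us = vs s := by
    apply Units.ext
    apply mul_left_cancel₀ (PowerSeries.X_ne_zero (R := ℂ))
    rw [hus, hXv s]
  rw [husv]
  exact main s k n hk hkn
end
end

section
/- Let α, β be complex numbers and let A be the upper triangular matrix with entries [A]_{k,n} = C(n,k)·β^{n-k}·(α+n-1)_{n-k} for 1 ≤ k ≤ n, where (x)_0 = 1 and (x)_m = x(x-1)⋯(x-m+1) is the falling factorial and C(n,k) the binomial coefficient. Then for every nonnegative integer s and all 1 ≤ k ≤ n, [A^s]_{k,n} = s^{n-k}·[A]_{k,n} = C(n,k)·(βs)^{n-k}·(α+n-1)_{n-k}. -/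
open PowerSeries Finset

noncomputable section

/-- The falling factorial `(x)_m = x(x-1)⋯(x-m+1)` of a complex number, `(x)_0 = 1`. -/
def fallFac (x : ℂ) : ℕ → ℂ
  | 0 => 1
  | m + 1 => fallFac x m * (x - m)

/-!
Write `[A]_{k,n} = C(n,k)·f(k,n)` with `f(k,n) = β^{n-k}(α+n-1)_{n-k} = ∏_{i=k}^{n-1} β(α+i)`.
Then `f(k,j)·f(j,n) = f(k,n)` for `k ≤ j ≤ n`, so by induction on `s`
`[A^{s+1}]_{k,n} = f(k,n) ∑_j s^{j-k} C(j,k) C(n,j) = f(k,n) C(n,k) (s+1)^{n-k}`,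
the last step being `C(n,j) C(j,k) = C(n,k) C(n-k,j-k)` and the binomial theorem.
-/

theorem fallFac_add (x : ℂ) (a b : ℕ) : fallFac x (a + b) = fallFac x a * fallFac (x - a) b := by
  induction b with
  | zero => simp [fallFac]
  | succ b ih =>
    rw [← add_assoc, fallFac, fallFac, ih]
    push_cast
    ring

theorem fallFac_mul_fallFac (α : ℂ) {k j n : ℕ} (hkj : k ≤ j) (hjn : j ≤ n) :
    fallFac (α + j - 1) (j - k) * fallFac (α + n - 1) (n - j) = fallFac (α + n - 1) (n - k) := by
  have hsplit : n - k = (n - j) + (j - k) := by omega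
  have harg : α + n - 1 - ((n - j : ℕ) : ℂ) = α + j - 1 := by
    rw [Nat.cast_sub hjn]
    ring
  rw [hsplit, fallFac_add, harg, mul_comm]

theorem sum_Icc_choose_mul_choose_mul_pow {R : Type*} [CommSemiring R] (x : R) {k n : ℕ}
    (hkn : k ≤ n) :
    ∑ j ∈ Icc k n, (n.choose j * j.choose k : R) * x ^ (j - k) =
      n.choose k * (x + 1) ^ (n - k) := by
  rw [← Ico_add_one_right_eq_Icc, sum_Ico_eq_sum_range, Nat.sub_add_comm hkn, add_pow, mul_sum]
  refine sum_congr rfl fun i _ => ?_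
  have hchoose : n.choose (k + i) * (k + i).choose k = n.choose k * (n - k).choose i := by
    rw [Nat.choose_mul (Nat.le_add_right k i), Nat.add_sub_cancel_left]
  rw [← Nat.cast_mul, hchoose, Nat.add_sub_cancel_left, one_pow]
  push_cast
  ring

theorem triPow_apply_of_choose_mul (A f : ℕ → ℕ → ℂ) (hf_self : ∀ k, 1 ≤ k → f k k = 1)
    (hf_mul : ∀ k j n, 1 ≤ k → k ≤ j → j ≤ n → f k j * f j n = f k n)
    (hA : ∀ k n, 1 ≤ k → k ≤ n → A k n = n.choose k * f k n)
    (s k n : ℕ) (hk : 1 ≤ k) (hkn : k ≤ n) :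
    triPow A s k n = (s : ℂ) ^ (n - k) * A k n := by
  induction s generalizing k n with
  | zero =>
    rcases hkn.eq_or_lt with rfl | hlt
    · simp [triPow, triId, hA k k hk le_rfl, hf_self k hk]
    · simp [triPow, triId, hlt.ne, Nat.sub_ne_zero_of_lt hlt]
  | succ s ih =>
    calc triPow A (s + 1) k n
        = ∑ j ∈ Icc k n, ((n.choose j : ℂ) * j.choose k * (s : ℂ) ^ (j - k)) * f k n := by
          simp only [triPow, triMul]
          refine sum_congr rfl fun j hj => ?_
          obtain ⟨hkj, hjn⟩ := mem_Icc.mp hj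
          rw [ih k j hk hkj, hA k j hk hkj, hA j n (hk.trans hkj) hjn, ← hf_mul k j n hk hkj hjn]
          ring
      _ = ((s + 1 : ℕ) : ℂ) ^ (n - k) * A k n := by
          rw [← sum_mul, sum_Icc_choose_mul_choose_mul_pow _ hkn, hA k n hk hkn]
          push_cast
          ring

theorem stmt15_general (α β : ℂ)
    (A : ℕ → ℕ → ℂ)
    (hA : ∀ k n, 1 ≤ k → k ≤ n →
      A k n = (n.choose k : ℂ) * β ^ (n - k) * fallFac (α + n - 1) (n - k))
    (s : ℕ) (k n : ℕ) (hk : 1 ≤ k) (hkn : k ≤ n) :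
    triPow A s k n = (s : ℂ) ^ (n - k) * A k n ∧
      triPow A s k n = (n.choose k : ℂ) * (β * s) ^ (n - k) * fallFac (α + n - 1) (n - k) := by
  have hpow : triPow A s k n = (s : ℂ) ^ (n - k) * A k n := by
    refine triPow_apply_of_choose_mul A (fun k n => β ^ (n - k) * fallFac (α + n - 1) (n - k))
      (fun k _ => by simp [fallFac]) (fun k j n _ hkj hjn => ?_)
      (fun k n hk hkn => by rw [hA k n hk hkn, mul_assoc]) s k n hk hkn
    rw [← fallFac_mul_fallFac α hkj hjn, show n - k = (j - k) + (n - j) by omega, pow_add]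
    ring
  refine ⟨hpow, ?_⟩
  rw [hpow, hA k n hk hkn]
  ring

/-- Example: for `[A]_{k,n} = C(n,k)·β^{n-k}·(α+n-1)_{n-k}` one has
`[A^s]_{k,n} = s^{n-k}·[A]_{k,n} = C(n,k)·(βs)^{n-k}·(α+n-1)_{n-k}`. -/
theorem stmt15 (α β : ℂ)
    (A : ℕ → ℕ → ℂ)
    (hAtri : ∀ k n, n < k → A k n = 0)
    (hA : ∀ k n, 1 ≤ k → k ≤ n →
      A k n = (n.choose k : ℂ) * β ^ (n - k) * fallFac (α + n - 1) (n - k))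
    (s : ℕ) (k n : ℕ) (hk : 1 ≤ k) (hkn : k ≤ n) :
    triPow A s k n = (s : ℂ) ^ (n - k) * A k n ∧
      triPow A s k n = (n.choose k : ℂ) * (β * s) ^ (n - k) * fallFac (α + n - 1) (n - k) :=
  stmt15_general α β A hA s k n hk hkn
end
end

section
/- Let α be a nonzero complex number and let A be the upper triangular matrix with entries [A]_{k,n} = (1/k!)·∑_{j=0}^{k} (-1)^{k-j}·C(k,j)·(αj)_n for 1 ≤ k ≤ n (these are the partial Bell polynomial values B_{n,k}((1+t)^α - 1)). Then for every nonnegative integer s and all 1 ≤ k ≤ n, [A^s]_{k,n} = (1/k!)·∑_{j=0}^{k} (-1)^{k-j}·C(k,j)·(α^s j)_n. -/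
/-!
Let `M(x) = bellMatrix x`, `[M(x)]_{k,n} = (1/k!) Δ^k[z ↦ (xz)_n](0) = B_{n,k}((1+t)^x - 1)`,
so that `A = M(α)` on `1 ≤ k ≤ n`.
Newton's forward-difference interpolation of the degree-`n` polynomial `z ↦ (yz)_n` gives
`(yw)_n = ∑_m (w)_m [M(y)]_{m,n}`. Substituting `w = xj` and taking the `k`-th difference in `j`
yields `M(x) M(y) = M(xy)`; together with `M(1) = I` this gives `A^s = M(α^s)`.
-/

open PowerSeries Finset

noncomputable section

open Polynomial Nat fwdDiff

theorem Polynomial.eval_eq_sum_descPochhammer_mul_fwdDiff_iter {K : Type*} [Field K] [CharZero K]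
    {P : K[X]} {N : ℕ} (hP : P.natDegree ≤ N) (z : K) :
    P.eval z = ∑ m ∈ range (N + 1), (descPochhammer K m).eval z / m ! * Δ_[1] ^[m] P.eval 0 := by
  set Q : K[X] := ∑ m ∈ range (N + 1), C (Δ_[1] ^[m] P.eval 0 / m !) * descPochhammer K m
  have hQ (w : K) : Q.eval w =
      ∑ m ∈ range (N + 1), (descPochhammer K m).eval w / m ! * Δ_[1] ^[m] P.eval 0 := by
    simp only [Q, eval_finsetSum, eval_mul, eval_C]
    exact sum_congr rfl fun m _ => by ring
  suffices hPQ : P = Q by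
    conv_lhs => rw [hPQ]
    exact hQ z
  refine eq_of_infinite_eval_eq P Q
    ((Set.infinite_range_of_injective Nat.cast_injective).mono ?_)
  rintro _ ⟨r, rfl⟩
  -- At `r : ℕ`, `(r)_m / m! = C(r, m)` and this is the Gregory–Newton formula.
  have hcoeff (m : ℕ) : (descPochhammer K m).eval (r : K) / m ! = r.choose m := by
    rw [descPochhammer_eval_eq_descFactorial, descFactorial_eq_factorial_mul_choose, cast_mul,
      mul_div_cancel_left₀ _ (cast_ne_zero.mpr m.factorial_ne_zero)]
  set u : ℕ → K := fun m => (r.choose m : K) * Δ_[1] ^[m] P.eval 0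
  have hu_choose : ∀ m ≥ r + 1, u m = 0 := fun m hm => by
    simp [u, choose_eq_zero_of_lt (show r < m by omega)]
  have hu_degree : ∀ m ≥ N + 1, u m = 0 := fun m hm => by
    simp [u, fwdDiff_iter_eq_zero_of_degree_lt (show P.natDegree < m by omega)]
  show P.eval (r : K) = Q.eval (r : K)
  calc P.eval (r : K) = ∑ m ∈ range (r + 1), u m := by
        simpa using shift_eq_sum_fwdDiff_iter (1 : K) P.eval r 0
    _ = ∑ m ∈ range (N + 1), u m := by
        rw [← eventually_constant_sum hu_choose (le_add_right (r + 1) (N + 1)),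
          eventually_constant_sum hu_degree (le_add_left (N + 1) (r + 1))]
    _ = Q.eval (r : K) := by
        rw [hQ]
        exact sum_congr rfl fun m _ => by simp [u, hcoeff]

lemma fallFac_eq_eval_descPochhammer (x : ℂ) (m : ℕ) :
    fallFac x m = (descPochhammer ℂ m).eval x := by
  induction m with
  | zero => simp [fallFac]
  | succ m ih => simp [fallFac, ih, descPochhammer_succ_right]

lemma fallFac_natCast (r m : ℕ) : fallFac r m = r.descFactorial m := by
  rw [fallFac_eq_eval_descPochhammer, descPochhammer_eval_eq_descFactorial]

lemma fallFac_mul_eq_eval_comp (x z : ℂ) (n : ℕ) :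
    fallFac (x * z) n = ((descPochhammer ℂ n).comp (Polynomial.C x * Polynomial.X)).eval z := by
  simp [fallFac_eq_eval_descPochhammer]

lemma natDegree_descPochhammer_comp_C_mul_X_le (x : ℂ) (n : ℕ) :
    ((descPochhammer ℂ n).comp (Polynomial.C x * Polynomial.X)).natDegree ≤ n :=
  natDegree_comp_le.trans <| by
    simpa [descPochhammer_natDegree] using
      Nat.mul_le_mul_left n ((natDegree_C_mul_le x X).trans natDegree_X_le)

def bellMatrix (x : ℂ) (k n : ℕ) : ℂ :=
  (1 / (k.factorial : ℂ)) *
    ∑ j ∈ Finset.range (k + 1), (-1 : ℂ) ^ (k - j) * (k.choose j : ℂ) * fallFac (x * j) n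

lemma bellMatrix_eq_fwdDiff_iter (x : ℂ) (k n : ℕ) :
    bellMatrix x k n = Δ_[1] ^[k] (fun z => fallFac (x * z) n) 0 / k ! := by
  rw [bellMatrix, fwdDiff_iter_eq_sum_shift, one_div_mul_eq_div]
  congr 1
  exact sum_congr rfl fun j _ => by simp

lemma bellMatrix_eq_zero_of_lt (x : ℂ) {k n : ℕ} (h : n < k) : bellMatrix x k n = 0 := by
  simp_rw [bellMatrix_eq_fwdDiff_iter, fallFac_mul_eq_eval_comp,
    fwdDiff_iter_eq_zero_of_degree_lt ((natDegree_descPochhammer_comp_C_mul_X_le x n).trans_lt h)]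
  simp

lemma fallFac_mul_eq_sum_bellMatrix (x w : ℂ) (n : ℕ) :
    fallFac (x * w) n = ∑ m ∈ range (n + 1), fallFac w m * bellMatrix x m n := by
  rw [fallFac_mul_eq_eval_comp, eval_eq_sum_descPochhammer_mul_fwdDiff_iter
    (natDegree_descPochhammer_comp_C_mul_X_le x n)]
  refine sum_congr rfl fun m _ => ?_
  simp_rw [bellMatrix_eq_fwdDiff_iter, fallFac_mul_eq_eval_comp, fallFac_eq_eval_descPochhammer]
  ring

lemma triMul_bellMatrix (x y : ℂ) :
    triMul (bellMatrix x) (bellMatrix y) = bellMatrix (x * y) := by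
  ext k n
  have hrange : ∑ m ∈ Icc k n, bellMatrix x k m * bellMatrix y m n =
      ∑ m ∈ range (n + 1), bellMatrix x k m * bellMatrix y m n := by
    refine sum_subset (fun m hm => ?_) fun m hm hmk => ?_
    · simp only [mem_Icc, mem_range] at hm ⊢
      omega
    · simp only [mem_range, mem_Icc] at hm hmk
      rw [bellMatrix_eq_zero_of_lt x (by omega), zero_mul]
  have hrow (m : ℕ) : bellMatrix x k m = 1 / k ! *
      ∑ j ∈ range (k + 1), (-1 : ℂ) ^ (k - j) * k.choose j * fallFac (x * j) m := rfl
  calc triMul (bellMatrix x) (bellMatrix y) k n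
      = ∑ m ∈ range (n + 1), bellMatrix x k m * bellMatrix y m n := hrange
    _ = 1 / k ! * ∑ j ∈ range (k + 1), (-1 : ℂ) ^ (k - j) * k.choose j *
          ∑ m ∈ range (n + 1), fallFac (x * j) m * bellMatrix y m n := by
        simp only [hrow, mul_sum, sum_mul]
        rw [sum_comm]
        exact sum_congr rfl fun j _ => sum_congr rfl fun m _ => by ring
    _ = bellMatrix (x * y) k n := by
        simp_rw [← fallFac_mul_eq_sum_bellMatrix, bellMatrix, mul_left_comm y x, mul_assoc]

lemma bellMatrix_one : bellMatrix 1 = triId := by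
  ext k n
  rcases lt_or_ge n k with hnk | hkn
  · rw [bellMatrix_eq_zero_of_lt 1 hnk, triId, if_neg hnk.ne']
  have hlower : ∀ j ∈ range k, (-1 : ℂ) ^ (k - j) * k.choose j * fallFac (1 * j) n = 0 :=
    fun j hj => by
      rw [one_mul, fallFac_natCast,
        descFactorial_eq_zero_iff_lt.mpr ((mem_range.mp hj).trans_le hkn)]
      simp
  rw [bellMatrix, sum_range_succ, sum_eq_zero hlower, one_mul, fallFac_natCast, triId]
  rcases hkn.eq_or_lt with rfl | hlt
  · simp [descFactorial_self, factorial_ne_zero]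
  · simp [descFactorial_eq_zero_iff_lt.mpr hlt, hlt.ne]

lemma triPow_bellMatrix (x : ℂ) (s : ℕ) : triPow (bellMatrix x) s = bellMatrix (x ^ s) := by
  induction s with
  | zero => rw [triPow, pow_zero, bellMatrix_one]
  | succ s ih => rw [triPow, ih, triMul_bellMatrix, pow_succ]

lemma triPow_congr {A B : ℕ → ℕ → ℂ} (h : ∀ k n, 1 ≤ k → k ≤ n → A k n = B k n) (s : ℕ)
    {k n : ℕ} (hk : 1 ≤ k) (hkn : k ≤ n) : triPow A s k n = triPow B s k n := by
  induction s generalizing n with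
  | zero => rfl
  | succ s ih =>
    simp only [triPow, triMul]
    refine sum_congr rfl fun m hm => ?_
    rw [mem_Icc] at hm
    rw [ih hm.1, h m n (hk.trans hm.1) hm.2]

theorem stmt18_general (α : ℂ)
    (A : ℕ → ℕ → ℂ)
    (hA : ∀ k n, 1 ≤ k → k ≤ n →
      A k n = (1 / (k.factorial : ℂ)) *
        ∑ j ∈ Finset.range (k + 1),
          (-1 : ℂ) ^ (k - j) * (k.choose j : ℂ) * fallFac (α * j) n)
    (s : ℕ) (k n : ℕ) (hk : 1 ≤ k) (hkn : k ≤ n) :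
    triPow A s k n = (1 / (k.factorial : ℂ)) *
      ∑ j ∈ Finset.range (k + 1),
        (-1 : ℂ) ^ (k - j) * (k.choose j : ℂ) * fallFac (α ^ s * j) n := by
  rw [triPow_congr (B := bellMatrix α) hA s hk hkn, triPow_bellMatrix]
  rfl

/-- Example: for `α ≠ 0` and `[A]_{k,n} = (1/k!)·∑_{j=0}^{k} (-1)^{k-j}·C(k,j)·(αj)_n`
(the values `B_{n,k}((1+t)^α - 1)`), one has
`[A^s]_{k,n} = (1/k!)·∑_{j=0}^{k} (-1)^{k-j}·C(k,j)·(α^s j)_n`. -/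
theorem stmt18 (α : ℂ) (hα : α ≠ 0)
    (A : ℕ → ℕ → ℂ)
    (hAtri : ∀ k n, n < k → A k n = 0)
    (hA : ∀ k n, 1 ≤ k → k ≤ n →
      A k n = (1 / (k.factorial : ℂ)) *
        ∑ j ∈ Finset.range (k + 1),
          (-1 : ℂ) ^ (k - j) * (k.choose j : ℂ) * fallFac (α * j) n)
    (s : ℕ) (k n : ℕ) (hk : 1 ≤ k) (hkn : k ≤ n) :
    triPow A s k n = (1 / (k.factorial : ℂ)) *
      ∑ j ∈ Finset.range (k + 1),
        (-1 : ℂ) ^ (k - j) * (k.choose j : ℂ) * fallFac (α ^ s * j) n :=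
  stmt18_general α A hA s k n hk hkn

end
end
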